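/- arXiv:1905.05123 — 4 statements merged into one kernel-verified Lean document; each statement's English description precedes it below -/
import Mathlib

section
/- For every integer z ≥ 2 and every integer q, the characteristic polynomial of the matrix N_z[q] is x^z − 1. -/
/-! Matrices `N_z[q]`, `M_z`, and block-diagonal sums. -/

/-- The `z × z` integer matrix `N_z[q]`: `(N)_{1,1} = 1`, `(N)_{1,z} = q`,
`(N)_{i,z} = -1` for `2 ≤ i ≤ z`, `(N)_{i,i-1} = 1` for `3 ≤ i ≤ z`, all other entries `0`
(indices here are 1-based; in Lean we use 0-based `Fin z`). -/
def NMat (z : ℕ) (q : ℤ) : Matrix (Fin z) (Fin z) ℤ := fun i j =>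
  if (i : ℕ) = 0 then (if (j : ℕ) = 0 then 1 else if (j : ℕ) = z - 1 then q else 0)
  else ((if (j : ℕ) + 1 = (i : ℕ) ∧ 2 ≤ (i : ℕ) then 1 else 0) +
        (if (j : ℕ) = z - 1 then -1 else 0))

/-- The `z × z` integer matrix `M_z`: `(M)_{1,z} = 1`, `(M)_{i,i-1} = 1` for `2 ≤ i ≤ z`,
all other entries `0`; this is the companion matrix of `x^z - 1`. -/
def MMat (z : ℕ) : Matrix (Fin z) (Fin z) ℤ := fun i j =>
  if ((j : ℕ) + 1 = (i : ℕ)) ∨ ((i : ℕ) = 0 ∧ (j : ℕ) = z - 1) then 1 else 0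

/-- Block-diagonal sum of a family of square integer matrices. -/
def blockDiag {ι : Type*} [DecidableEq ι] {z : ι → ℕ}
    (B : ∀ i, Matrix (Fin (z i)) (Fin (z i)) ℤ) :
    Matrix ((i : ι) × Fin (z i)) ((i : ι) × Fin (z i)) ℤ := fun x y =>
  if h : y.1 = x.1 then B x.1 x.2 (Fin.cast (congrArg z h) y.2) else 0

/-- The index type of the block structure of the matrix `A(q)`:
for each `j : Fin t` there are `(p_j^{r_j}-1)/2` blocks of size `p_j^{r_j}`
(one `N`-block and `(p_j^{r_j}-3)/2` `M`-blocks), and for each pair `j < h` one block of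
size `p_j^{r_j} p_h^{r_h}`. -/
abbrev AIdx (t : ℕ) (p r : Fin t → ℕ) : Type :=
  ((j : Fin t) × Fin ((p j ^ r j - 1) / 2)) ⊕ {x : Fin t × Fin t // x.1 < x.2}

/-- The sizes of the blocks of `A(q)`. -/
def ASize (t : ℕ) (p r : Fin t → ℕ) : AIdx t p r → ℕ
  | .inl x => p x.1 ^ r x.1
  | .inr x => p x.1.1 ^ r x.1.1 * p x.1.2 ^ r x.1.2

/-- The blocks of `A(q)`: for each `j : Fin t` the block `N_{p_j^{r_j}}[q]` followed by
`(p_j^{r_j}-3)/2` copies of `M_{p_j^{r_j}}`, and for each pair `j < h` the block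
`M_{p_j^{r_j} p_h^{r_h}}`. -/
def ABlocks (t : ℕ) (p r : Fin t → ℕ) (q : ℤ) :
    ∀ k : AIdx t p r, Matrix (Fin (ASize t p r k)) (Fin (ASize t p r k)) ℤ
  | .inl x => if (x.2 : ℕ) = 0 then NMat (p x.1 ^ r x.1) q else MMat (p x.1 ^ r x.1)
  | .inr x => MMat (p x.1.1 ^ r x.1.1 * p x.1.2 ^ r x.1.2)

/-- The block-diagonal matrix
`A(q) = ⊕_j (N_{p_j^{r_j}}[q] ⊕ ⊕_h M_{p_j^{r_j}}) ⊕ ⊕_{j<h} M_{p_j^{r_j} p_h^{r_h}}`. -/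
def AMat (t : ℕ) (p r : Fin t → ℕ) (q : ℤ) :
    Matrix ((k : AIdx t p r) × Fin (ASize t p r k))
      ((k : AIdx t p r) × Fin (ASize t p r k)) ℤ :=
  blockDiag (ABlocks t p r q)

/-!
The first column of `N_z[q]` is the first unit vector, so its characteristic polynomial is
`X - 1` times that of the lower right `(z-1) × (z-1)` block, which is the companion matrix
of `1 + X + ⋯ + X^(z-1)`. The characteristic polynomial of a companion matrix is computed by
expanding along the first row: the minor of the corner entry is triangular with diagonal `-1`,
which gives `χ(a₀, …, aₙ) = X · χ(a₁, …, aₙ) + a₀`.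
-/

open Polynomial Matrix

namespace Matrix

variable {R : Type*} [CommRing R]

lemma charmatrix_submatrix {n m : Type*} [Fintype n] [DecidableEq n] [Fintype m] [DecidableEq m]
    (M : Matrix n n R) {e : m → n} (he : Function.Injective e) :
    (charmatrix M).submatrix e e = charmatrix (M.submatrix e e) := by
  ext i j : 1
  by_cases h : i = j
  · simp [h]
  · simp [h, he.ne h]

lemma charpoly_eq_X_sub_C_mul_charpoly_submatrix_succ {n : ℕ}
    (M : Matrix (Fin (n + 1)) (Fin (n + 1)) R) (h : ∀ i : Fin n, M i.succ 0 = 0) :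
    M.charpoly = (X - C (M 0 0)) * (M.submatrix Fin.succ Fin.succ).charpoly := by
  rw [charpoly, det_succ_column_zero, Fin.sum_univ_succ, Fintype.sum_eq_zero]
  · rw [charmatrix_apply_eq, Fin.succAbove_zero, charmatrix_submatrix _ (Fin.succ_injective _),
      charpoly, Fin.val_zero, pow_zero, one_mul, add_zero]
  · intro i
    rw [charmatrix_apply_ne _ _ _ (Fin.succ_ne_zero i), h, map_zero, neg_zero, mul_zero, zero_mul]

end Matrix

section Companion

variable {R : Type*} [CommRing R]

def companion {n : ℕ} (a : Fin n → R) : Matrix (Fin n) (Fin n) R :=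
  of fun i j => (if (i : ℕ) = j + 1 then 1 else 0) - if (j : ℕ) + 1 = n then a i else 0

lemma companion_submatrix_succ {n : ℕ} (a : Fin (n + 1) → R) :
    (companion a).submatrix Fin.succ Fin.succ = companion fun i => a i.succ := by
  ext i j
  simp [companion]

lemma charmatrix_companion_zero_apply {n : ℕ} (a : Fin (n + 2) → R) (j : Fin (n + 2)) :
    charmatrix (companion a) 0 j =
      (if j = 0 then X else 0) + if j = Fin.last (n + 1) then C (a 0) else 0 := by
  simp only [charmatrix_apply, companion, diagonal_apply, Fin.ext_iff, of_apply, Fin.val_zero,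
    Fin.val_last]
  split_ifs <;> first | contradiction | omega | simp

lemma det_charmatrix_companion_submatrix_succ_castSucc {n : ℕ} (a : Fin (n + 1) → R) :
    ((charmatrix (companion a)).submatrix Fin.succ Fin.castSucc).det = (-1) ^ n := by
  have hentry (i j : Fin n) : (charmatrix (companion a)).submatrix Fin.succ Fin.castSucc i j =
      (if (j : ℕ) = i + 1 then X else 0) - if (i : ℕ) = j then 1 else 0 := by
    simp only [submatrix_apply, charmatrix_apply, companion, diagonal_apply, Fin.ext_iff, of_apply,
      Fin.val_succ, Fin.val_castSucc]
    split_ifs <;> first | omega | simp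
  rw [det_of_isUpperTriangular]
  · simp only [hentry]
    simp
  · intro i j hij
    have hji : (j : ℕ) < i := hij
    rw [hentry, if_neg (by omega), if_neg (by omega), sub_zero]

lemma charpoly_companion_succ_succ {n : ℕ} (a : Fin (n + 2) → R) :
    (companion a).charpoly = X * (companion fun i => a i.succ).charpoly + C (a 0) := by
  have h0last : (0 : Fin (n + 2)) ≠ Fin.last (n + 1) := Fin.last_pos.ne
  rw [charpoly, det_succ_row_zero, Fintype.sum_eq_add 0 (Fin.last (n + 1)) h0last]
  · rw [charmatrix_companion_zero_apply, charmatrix_companion_zero_apply, Fin.succAbove_zero,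
      Fin.succAbove_last, charmatrix_submatrix _ (Fin.succ_injective _), companion_submatrix_succ,
      det_charmatrix_companion_submatrix_succ_castSucc, if_pos rfl, if_neg h0last,
      if_neg h0last.symm, if_pos rfl, charpoly]
    have hsign : ((-1 : R[X]) ^ (n + 1)) * (-1) ^ (n + 1) = 1 := by
      rw [← mul_pow, neg_one_mul, neg_neg, one_pow]
    simp only [Fin.val_zero, Fin.val_last]
    linear_combination C (a 0) * hsign
  · rintro j ⟨hj0, hjlast⟩
    rw [charmatrix_companion_zero_apply, if_neg hj0, if_neg hjlast]
    ring

theorem charpoly_companion : ∀ {n : ℕ} (a : Fin n → R),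
    (companion a).charpoly = X ^ n + ∑ i, C (a i) * X ^ (i : ℕ)
  | 0, a => by simp
  | 1, a => by
    rw [charpoly, det_fin_one]
    simp [companion]
  | n + 2, a => by
    rw [charpoly_companion_succ_succ, charpoly_companion, Fin.sum_univ_succ (n := n + 1)]
    simp only [Fin.val_zero, Fin.val_succ, pow_zero, mul_one, pow_succ, mul_add, Finset.mul_sum]
    simp only [mul_left_comm X, mul_comm _ X]
    ring

end Companion

section NMat

variable (n : ℕ) (q : ℤ)

lemma NMat_zero_zero : NMat (n + 2) q 0 0 = 1 := by
  simp [NMat]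

lemma NMat_succ_zero (i : Fin (n + 1)) : NMat (n + 2) q i.succ 0 = 0 := by
  simp [NMat]

lemma NMat_submatrix_succ :
    (NMat (n + 2) q).submatrix Fin.succ Fin.succ = companion fun _ => 1 := by
  ext i j
  simp only [NMat, companion, submatrix_apply, of_apply, Fin.val_succ]
  split_ifs <;> first | contradiction | omega

end NMat

open Polynomial in
/-- the characteristic polynomial of `N_z[q]` is `x^z - 1`. -/
theorem statement9 (z : ℕ) (hz : 2 ≤ z) (q : ℤ) :
    (NMat z q).charpoly = X ^ z - 1 := by
  obtain ⟨n, rfl⟩ := Nat.exists_eq_add_of_le' hz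
  rw [charpoly_eq_X_sub_C_mul_charpoly_submatrix_succ _ (NMat_succ_zero n q), NMat_zero_zero,
    NMat_submatrix_succ, charpoly_companion]
  simp only [map_one, one_mul, Fin.sum_univ_eq_sum_range (fun i => (X : ℤ[X]) ^ i),
    add_comm (X ^ (n + 1)), ← Finset.sum_range_succ]
  rw [mul_comm, geom_sum_mul]
end

section
/- The determinant of the block-diagonal integer matrix A(q) = ⊕_{j=1}^{t} ( N_{p_j^{r_j}}[q] ⊕ ⊕_{h=1}^{(p_j^{r_j}−3)/2} M_{p_j^{r_j}} ) ⊕ ⊕_{1 ≤ j < h ≤ t} M_{p_j^{r_j} p_h^{r_h}} is equal to 1 (so that A(q) ∈ SL over Z; this expresses the orientability of the flat manifold with fundamental group Γ_q). -/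
lemma det_MMat (z : ℕ) (hz : Odd z) : (MMat z).det = 1 := by
  obtain ⟨n, rfl⟩ : ∃ n, z = n + 1 := ⟨z - 1, by have := hz.pos; omega⟩
  have hn : Even n := by rcases hz with ⟨m, hm⟩; exact ⟨m, by omega⟩
  have hM : MMat (n + 1) = (Equiv.Perm.permMatrix ℤ (finRotate (n + 1))).transpose := by
    ext i j
    have hval : ((j + 1 : Fin (n + 1)) : ℕ) = if (j : ℕ) = n then 0 else (j : ℕ) + 1 := by
      rw [Fin.val_add_one]
      by_cases hj : j = Fin.last n
      · simp [hj]
      · have h2 : (j : ℕ) ≠ n := fun h => hj (Fin.ext (by simpa using h))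
        simp [hj, h2]
    have hiff : ((j : ℕ) + 1 = (i : ℕ) ∨ ((i : ℕ) = 0 ∧ (j : ℕ) = n)) ↔ (j + 1 = i) := by
      rw [Fin.ext_iff, hval]
      have := i.isLt; have := j.isLt
      split_ifs with h <;> omega
    simp only [MMat, Equiv.Perm.permMatrix, PEquiv.toMatrix, Matrix.transpose_apply,
      finRotate_succ_apply, Equiv.toPEquiv_apply, Option.mem_def, Option.some.injEq,
      Matrix.of_apply, add_tsub_cancel_right]
    exact if_congr hiff rfl rfl
  rw [hM, Matrix.det_transpose, Matrix.det_permutation, sign_finRotate]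
  push_cast
  exact hn.neg_one_pow

lemma det_NMat (z : ℕ) (hz : Odd z) (hz3 : 3 ≤ z) (q : ℤ) : (NMat z q).det = 1 := by
  obtain ⟨m, rfl⟩ : ∃ m, z = m + 3 := ⟨z - 3, by omega⟩
  have hm : Even (m + 2) := by rcases hz with ⟨k, hk⟩; exact ⟨k, by omega⟩
  set ρ : Equiv.Perm (Fin (m + 3)) := Equiv.swap 0 1 * finRotate (m + 3) with hρdef
  have key : ∀ i : Fin (m + 3),
      ((ρ i : Fin (m + 3)) : ℕ) =
        if (i : ℕ) = m + 2 then 1 else if (i : ℕ) = 0 then 0 else (i : ℕ) + 1 := by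
    intro i
    have hval : ((i + 1 : Fin (m + 3)) : ℕ) = if (i : ℕ) = m + 2 then 0 else (i : ℕ) + 1 := by
      rw [Fin.val_add_one]
      by_cases hj : i = Fin.last (m + 2)
      · simp [hj]
      · have h2 : (i : ℕ) ≠ m + 2 := fun h => hj (Fin.ext (by simpa using h))
        simp [hj, h2]
    rw [show ρ i = (Equiv.swap 0 1) (finRotate (m + 3) i) from rfl,
      finRotate_succ_apply, Equiv.swap_apply_def]
    by_cases h2 : (i : ℕ) = m + 2
    · have e0 : i + 1 = (0 : Fin (m + 3)) := Fin.ext (by simp [hval, h2])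
      simp [e0, h2]
    · by_cases h0 : (i : ℕ) = 0
      · have e1 : i + 1 = (1 : Fin (m + 3)) := Fin.ext (by simp [hval, h2, h0])
        have ne0 : i + 1 ≠ (0 : Fin (m + 3)) := by
          rw [Ne, Fin.ext_iff]; simp [hval, h2]
        simp [e1, ne0, h0, h2]
      · have ne0 : i + 1 ≠ (0 : Fin (m + 3)) := by
          rw [Ne, Fin.ext_iff]; simp [hval, h2]
        have ne1 : i + 1 ≠ (1 : Fin (m + 3)) := by
          rw [Ne, Fin.ext_iff, hval, if_neg h2, Fin.val_one]; omega
        simp [ne0, ne1, h0, h2, hval]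
  set U : Matrix (Fin (m + 3)) (Fin (m + 3)) ℤ :=
    Matrix.of fun i j => NMat (m + 3) q (ρ i) j with hU
  have hUt : U.BlockTriangular id := by
    intro i j hij
    simp only [id_eq] at hij
    have hlt : (j : ℕ) < (i : ℕ) := hij
    show NMat (m + 3) q (ρ i) j = 0
    have hi := i.isLt; have hj := j.isLt
    simp only [NMat, key i]
    split_ifs <;> first | exact (False.elim ‹False›) | omega
  have hdiag : ∀ i : Fin (m + 3), U i i = if i = Fin.last (m + 2) then -1 else 1 := by
    intro i
    show NMat (m + 3) q (ρ i) i = _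
    have hi := i.isLt
    have hlast : (i = Fin.last (m + 2)) ↔ (i : ℕ) = m + 2 := by
      rw [Fin.ext_iff]; simp
    simp only [NMat, key i, hlast]
    split_ifs <;> first | exact (False.elim ‹False›) | omega
  have hdet : U.det = -1 := by
    rw [Matrix.det_of_upperTriangular hUt]
    rw [Finset.prod_congr rfl fun i _ => hdiag i]
    rw [Finset.prod_ite_eq' Finset.univ (Fin.last (m + 2)) (fun _ => (-1 : ℤ))]
    simp
  have hperm := Matrix.det_permute ρ (NMat (m + 3) q)
  have hsign : (Equiv.Perm.sign ρ : ℤ) = -1 := by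
    rw [hρdef, Equiv.Perm.sign_mul, Equiv.Perm.sign_swap (Fin.zero_ne_one), sign_finRotate]
    rcases hm with ⟨k, hk⟩
    rw [show m + 3 - 1 = k + k by omega]
    push_cast
    rw [show k + k = 2 * k by ring, pow_mul]
    norm_num
  have : U.det = (Equiv.Perm.sign ρ : ℤ) * (NMat (m + 3) q).det := hperm
  rw [hdet, hsign] at this
  linarith

lemma det_blockDiag {ι : Type*} [Fintype ι] [DecidableEq ι] {z : ι → ℕ}
    (B : ∀ i, Matrix (Fin (z i)) (Fin (z i)) ℤ) :
    (blockDiag B).det = ∏ i, (B i).det := by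
  classical
  let e := Fintype.equivFin ι
  have hbt : (blockDiag B).BlockTriangular (fun x => e x.1) := by
    intro x y h
    have hy : y.1 ≠ x.1 := fun hy => by simp only [hy] at h; exact lt_irrefl _ h
    exact dif_neg hy
  rw [hbt.det_fintype, ← e.prod_comp]
  refine Finset.prod_congr rfl fun i _ => ?_
  let φ : Fin (z i) ≃ {x : (k : ι) × Fin (z k) // e x.1 = e i} :=
    { toFun := fun j => ⟨⟨i, j⟩, rfl⟩
      invFun := fun x => Fin.cast (congrArg z (e.injective x.2)) x.1.2
      left_inv := fun j => rfl
      right_inv := fun x => by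
        obtain ⟨⟨k, j⟩, hk⟩ := x
        have : k = i := e.injective hk
        subst this
        rfl }
  rw [← Matrix.det_submatrix_equiv_self φ]
  congr 1
  ext a b
  show blockDiag B ⟨i, a⟩ ⟨i, b⟩ = B i a b
  unfold blockDiag
  rw [dif_pos rfl]
  congr 1

/-- the determinant of the block-diagonal matrix `A(q)` equals `1`
(orientability of the flat manifold with fundamental group `Γ_q`). -/
theorem statement10 (t : ℕ) (ht : 1 ≤ t) (p r : Fin t → ℕ)
    (hp : ∀ i, (p i).Prime ∧ Odd (p i)) (hr : ∀ i, 1 ≤ r i)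
    (hinj : Function.Injective p)
    (q : ℕ) (hq : q = ∏ i, p i ^ r i) :
    (AMat t p r (q : ℤ)).det = 1 := by
  rw [AMat, det_blockDiag]
  apply Finset.prod_eq_one
  intro k _
  rcases k with x | x
  · have hodd : Odd (p x.1 ^ r x.1) := (hp x.1).2.pow
    have h3 : 3 ≤ p x.1 ^ r x.1 := by
      have hp3 : 3 ≤ p x.1 := by
        have h2 := (hp x.1).1.two_le
        have := (hp x.1).2
        rcases Nat.lt_or_ge (p x.1) 3 with h | h
        · interval_cases h' : p x.1 <;> simp_all [Nat.odd_iff]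
        · exact h
      calc 3 ≤ p x.1 := hp3
        _ ≤ p x.1 ^ r x.1 := Nat.le_self_pow (by have := hr x.1; omega) _
    show (ABlocks t p r (q : ℤ) (Sum.inl x)).det = 1
    rw [ABlocks]
    by_cases h : (x.2 : ℕ) = 0
    · simp only [h, if_true]; exact det_NMat _ hodd h3 _
    · simp only [h, if_false]; exact det_MMat _ hodd
  · show (ABlocks t p r (q : ℤ) (Sum.inr x)).det = 1
    rw [ABlocks]
    exact det_MMat _ ((hp x.1.1).2.pow.mul (hp x.1.2).2.pow)
end

section
/- Let N = Σ_{j=1}^t p_j^{r_j}(p_j^{r_j}−1)/2 + Σ_{1≤j<h≤t} p_j^{r_j} p_h^{r_h} be the size of the matrix A(q). Then, over Q, the eigenspace of A(q) for the eigenvalue 1 has dimension Σ_{j=1}^{t} (p_j^{r_j}−1)/2 + t(t−1)/2; equivalently, the rank of A(q) − I equals N − Σ_{j=1}^{t} (p_j^{r_j}−1)/2 − t(t−1)/2 (this number Σ_{j}(p_j^{r_j}−1)/2 + t(t−1)/2 is the first Betti number of the flat manifold with fundamental group Γ_q). -/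
open Matrix Module LinearMap Finset

/-- previous index in the cycle -/
def prevIdx {z : ℕ} (hz : 0 < z) (i : Fin z) : Fin z :=
  if h : (i : ℕ) = 0 then ⟨z - 1, Nat.sub_lt hz one_pos⟩
  else ⟨(i : ℕ) - 1, lt_of_le_of_lt (Nat.sub_le _ _) i.2⟩

lemma MMat_apply {z : ℕ} (hz : 0 < z) (i j : Fin z) :
    MMat z i j = if j = prevIdx hz i then 1 else 0 := by
  unfold MMat prevIdx
  by_cases h : (i : ℕ) = 0
  · rw [dif_pos h]
    simp only [h, and_true, true_and, Fin.ext_iff]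
    have : ¬ ((j:ℕ) + 1 = 0) := by omega
    simp [this]
  · rw [dif_neg h]
    simp only [h, false_and, or_false, Fin.ext_iff]
    congr 1
    simp only [eq_iff_iff]
    omega

lemma MQ_mulVec {z : ℕ} (hz : 0 < z) (x : Fin z → ℚ) (i : Fin z) :
    ((MMat z).map ((↑) : ℤ → ℚ)).mulVec x i = x (prevIdx hz i) := by
  unfold Matrix.mulVec dotProduct
  have : ∀ j, ((MMat z).map ((↑) : ℤ → ℚ)) i j * x j
      = if j = prevIdx hz i then x j else 0 := by
    intro j
    rw [Matrix.map_apply, MMat_apply hz]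
    split <;> simp
  simp_rw [this]
  rw [Finset.sum_ite_eq' Finset.univ (prevIdx hz i) x]
  simp

lemma ker_MQ {z : ℕ} (hz : 0 < z) :
    LinearMap.ker ((MMat z).map ((↑) : ℤ → ℚ) - 1).mulVecLin
      = ℚ ∙ (fun _ => 1 : Fin z → ℚ) := by
  apply le_antisymm
  · intro x hx
    rw [LinearMap.mem_ker] at hx
    have hx' : ∀ i, x (prevIdx hz i) = x i := by
      intro i
      have := congrFun hx i
      rw [Matrix.mulVecLin_apply, Matrix.sub_mulVec, Matrix.one_mulVec] at this
      have h2 := MQ_mulVec hz x i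
      simp only [Pi.sub_apply, Pi.zero_apply] at this
      linarith [h2 ▸ this]
    have key : ∀ n (h : n < z), x ⟨n, h⟩ = x ⟨0, hz⟩ := by
      intro n
      induction n with
      | zero => intro h; rfl
      | succ m ih =>
        intro h
        have hm : m < z := Nat.lt_of_succ_lt h
        have : prevIdx hz ⟨m + 1, h⟩ = ⟨m, hm⟩ := by
          unfold prevIdx
          rw [dif_neg (by simp)]
          exact Fin.ext (by simp)
        rw [← hx' ⟨m + 1, h⟩, this, ih hm]
    rw [Submodule.mem_span_singleton]
    refine ⟨x ⟨0, hz⟩, ?_⟩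
    funext i
    have := key i i.2
    simp only [smul_eq_mul, Pi.smul_apply, mul_one]
    rw [← this]
  · rw [Submodule.span_singleton_le_iff_mem, LinearMap.mem_ker]
    funext i
    rw [Matrix.mulVecLin_apply, Matrix.sub_mulVec, Matrix.one_mulVec]
    simp only [Pi.sub_apply, Pi.zero_apply]
    rw [MQ_mulVec hz]
    simp [prevIdx]

lemma finrank_ker_MQ {z : ℕ} (hz : 0 < z) :
    finrank ℚ (LinearMap.ker ((MMat z).map ((↑) : ℤ → ℚ) - 1).mulVecLin) = 1 := by
  rw [ker_MQ hz]
  exact finrank_span_singleton (by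
    intro h
    have := congrFun h ⟨0, hz⟩
    simp at this)


lemma NQ_mulVec {z : ℕ} (hz : 3 ≤ z) (q : ℤ) (x : Fin z → ℚ) (i : Fin z) :
    ((NMat z q).map ((↑) : ℤ → ℚ)).mulVec x i =
      if h : (i : ℕ) = 0 then
        x ⟨0, by omega⟩ + (q : ℚ) * x ⟨z - 1, by omega⟩
      else (if h2 : 2 ≤ (i : ℕ) then x ⟨(i : ℕ) - 1, by omega⟩ else 0) - x ⟨z - 1, by omega⟩ := by
  unfold Matrix.mulVec dotProduct
  by_cases h : (i : ℕ) = 0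
  · rw [dif_pos h]
    have : ∀ j : Fin z, ((NMat z q).map ((↑) : ℤ → ℚ)) i j * x j
        = (if j = (⟨0, by omega⟩ : Fin z) then x j else 0)
          + (if j = (⟨z - 1, by omega⟩ : Fin z) then (q : ℚ) * x j else 0) := by
      intro j
      rw [Matrix.map_apply]
      unfold NMat
      rw [if_pos h]
      simp only [Fin.ext_iff]
      rcases eq_or_ne (j : ℕ) 0 with hj | hj
      · simp [hj, show ¬ ((0:ℕ) = z - 1) by omega]
      · rcases eq_or_ne (j : ℕ) (z - 1) with hj2 | hj2
        · rw [if_neg hj, if_pos hj2, if_neg hj, if_pos hj2]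
          push_cast; ring
        · simp [hj, hj2]
    simp_rw [this]
    rw [Finset.sum_add_distrib, Finset.sum_ite_eq' Finset.univ, Finset.sum_ite_eq' Finset.univ]
    simp
  · rw [dif_neg h]
    have : ∀ j : Fin z, ((NMat z q).map ((↑) : ℤ → ℚ)) i j * x j
        = (if h2 : 2 ≤ (i : ℕ) then
            (if j = (⟨(i : ℕ) - 1, by omega⟩ : Fin z) then x j else 0) else 0)
          + (if j = (⟨z - 1, by omega⟩ : Fin z) then -x j else 0) := by
      intro j
      rw [Matrix.map_apply]
      unfold NMat
      rw [if_neg h]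
      push_cast
      rw [add_mul]
      congr 1
      · simp only [Fin.ext_iff]
        by_cases h2 : 2 ≤ (i : ℕ)
        · rw [dif_pos h2]
          by_cases hj : (j : ℕ) + 1 = (i : ℕ)
          · rw [if_pos ⟨hj, h2⟩, if_pos (show (j:ℕ) = (i:ℕ) - 1 by omega)]
            simp
          · rw [if_neg (fun hh => hj hh.1), if_neg (show ¬ ((j:ℕ) = (i:ℕ) - 1) by omega)]
            simp
        · rw [dif_neg h2, if_neg (fun hh => h2 hh.2)]
          simp
      · simp only [Fin.ext_iff]
        rcases eq_or_ne (j : ℕ) (z - 1) with hj2 | hj2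
        · rw [if_pos hj2, if_pos hj2]; push_cast; ring
        · rw [if_neg hj2, if_neg hj2]; simp
    simp_rw [this]
    rw [Finset.sum_add_distrib, Finset.sum_ite_eq' Finset.univ]
    by_cases h2 : 2 ≤ (i : ℕ)
    · simp_rw [dif_pos h2]
      rw [Finset.sum_ite_eq' Finset.univ]
      simp [sub_eq_add_neg]
    · simp [h2, sub_eq_add_neg]

lemma ker_NQ {z : ℕ} (hz : 3 ≤ z) (q : ℤ) (hq : q ≠ 0) :
    LinearMap.ker ((NMat z q).map ((↑) : ℤ → ℚ) - 1).mulVecLin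
      = ℚ ∙ (Pi.single (⟨0, by omega⟩ : Fin z) 1 : Fin z → ℚ) := by
  apply le_antisymm
  · intro x hx
    rw [LinearMap.mem_ker] at hx
    have hx' : ∀ i : Fin z, ((NMat z q).map ((↑) : ℤ → ℚ)).mulVec x i = x i := by
      intro i
      have := congrFun hx i
      rw [Matrix.mulVecLin_apply, Matrix.sub_mulVec, Matrix.one_mulVec] at this
      simp only [Pi.sub_apply, Pi.zero_apply] at this
      linarith
    have h0 := hx' ⟨0, by omega⟩
    rw [NQ_mulVec hz] at h0
    rw [dif_pos rfl] at h0
    have hl : x ⟨z - 1, by omega⟩ = 0 := by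
      have hq' : (q : ℚ) ≠ 0 := Int.cast_ne_zero.mpr hq
      have : (q : ℚ) * x ⟨z - 1, by omega⟩ = 0 := by linarith
      exact (mul_eq_zero.mp this).resolve_left hq'
    have key : ∀ n, 1 ≤ n → ∀ (h : n < z), x ⟨n, h⟩ = 0 := by
      intro n
      induction n with
      | zero => omega
      | succ m ih =>
        intro _ h
        have hrow := hx' ⟨m + 1, h⟩
        rw [NQ_mulVec hz, dif_neg (by simp)] at hrow
        simp only at hrow
        rcases Nat.lt_or_ge m 1 with hm | hm
        · interval_cases m
          rw [dif_neg (by simp)] at hrow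
          rw [← hrow, hl]; ring
        · rw [dif_pos (by simp; omega)] at hrow
          have : x ⟨m, by omega⟩ = 0 := ih hm (by omega)
          rw [← hrow, hl]
          simpa using this
    rw [Submodule.mem_span_singleton]
    refine ⟨x ⟨0, by omega⟩, ?_⟩
    funext i
    rw [Pi.smul_apply, Pi.single_apply, smul_eq_mul]
    rcases eq_or_ne i (⟨0, by omega⟩ : Fin z) with hi | hi
    · rw [if_pos hi, hi]; ring
    · rw [if_neg hi, mul_zero]
      have : 1 ≤ (i : ℕ) := by
        rcases Nat.eq_zero_or_pos (i : ℕ) with h | h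
        · exact absurd (Fin.ext h) hi
        · exact h
      exact (key (i : ℕ) this i.2).symm
  · rw [Submodule.span_singleton_le_iff_mem, LinearMap.mem_ker]
    funext i
    rw [Matrix.mulVecLin_apply, Matrix.sub_mulVec, Matrix.one_mulVec]
    simp only [Pi.sub_apply, Pi.zero_apply]
    rw [NQ_mulVec hz]
    simp only [Pi.single_apply, Fin.ext_iff]
    by_cases h : (i : ℕ) = 0
    · rw [dif_pos h]
      simp [h, show ¬ ((z:ℕ) - 1 = 0) by omega]
    · rw [dif_neg h]
      by_cases h2 : 2 ≤ (i : ℕ)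
      · rw [dif_pos h2]
        simp [h, show ¬ ((z:ℕ) - 1 = 0) by omega, show ¬ ((i:ℕ) - 1 = 0) by omega]
      · rw [dif_neg h2]
        simp [h, show ¬ ((z:ℕ) - 1 = 0) by omega]

lemma finrank_ker_NQ {z : ℕ} (hz : 3 ≤ z) (q : ℤ) (hq : q ≠ 0) :
    finrank ℚ (LinearMap.ker ((NMat z q).map ((↑) : ℤ → ℚ) - 1).mulVecLin) = 1 := by
  rw [ker_NQ hz q hq]
  exact finrank_span_singleton (by
    intro h
    have := congrFun h ⟨0, by omega⟩
    simp at this)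

/-- `Submodule.pi Set.univ p` is equivalent to the product of the `p i`. -/
def piSubEquiv {R : Type*} [Ring R] {ι : Type*} {M : ι → Type*} [∀ i, AddCommGroup (M i)]
    [∀ i, Module R (M i)] (p : ∀ i, Submodule R (M i)) :
    (Submodule.pi Set.univ p) ≃ₗ[R] ∀ i, p i where
  toFun x i := ⟨x.1 i, x.2 i (Set.mem_univ i)⟩
  map_add' _ _ := rfl
  map_smul' _ _ := rfl
  invFun y := ⟨fun i => y i, fun i _ => (y i).2⟩
  left_inv _ := rfl
  right_inv _ := rfl

lemma mulVec_blockDiagonal' {ι : Type*} [Fintype ι] [DecidableEq ι] {z : ι → ℕ}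
    (B : ∀ i, Matrix (Fin (z i)) (Fin (z i)) ℚ) (v : ((i : ι) × Fin (z i)) → ℚ)
    (k : ι) (i : Fin (z k)) :
    (Matrix.blockDiagonal' B).mulVec v ⟨k, i⟩ = (B k).mulVec (fun j => v ⟨k, j⟩) i := by
  show ∑ x : (i : ι) × Fin (z i), Matrix.blockDiagonal' B ⟨k, i⟩ x * v x = _
  rw [← Finset.univ_sigma_univ, Finset.sum_sigma]
  rw [Finset.sum_eq_single_of_mem k (Finset.mem_univ k)]
  · simp only [Matrix.blockDiagonal'_apply_eq]
    rfl
  · intro k' _ hk'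
    apply Finset.sum_eq_zero
    intro j _
    rw [Matrix.blockDiagonal'_apply_ne _ _ _ (Ne.symm hk'), zero_mul]

lemma finrank_ker_blockDiagonal' {ι : Type*} [Fintype ι] [DecidableEq ι] {z : ι → ℕ}
    (B : ∀ i, Matrix (Fin (z i)) (Fin (z i)) ℚ) :
    finrank ℚ (LinearMap.ker (Matrix.blockDiagonal' B).mulVecLin)
      = ∑ i, finrank ℚ (LinearMap.ker (B i).mulVecLin) := by
  classical
  set e := LinearEquiv.piCurry ℚ (fun (i : ι) (_ : Fin (z i)) => ℚ) with he
  have hmap : (LinearMap.ker (Matrix.blockDiagonal' B).mulVecLin).map e.toLinearMap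
      = Submodule.pi Set.univ (fun i => LinearMap.ker (B i).mulVecLin) := by
    ext y
    rw [Submodule.mem_map]
    constructor
    · rintro ⟨v, hv, rfl⟩
      rw [Submodule.mem_pi]
      intro k _
      rw [LinearMap.mem_ker] at hv ⊢
      funext i
      have := congrFun hv ⟨k, i⟩
      rw [Matrix.mulVecLin_apply, mulVec_blockDiagonal'] at this
      simp [he, Matrix.mulVecLin_apply, Sigma.curry]
      exact this
    · intro hy
      rw [Submodule.mem_pi] at hy
      refine ⟨e.symm y, ?_, e.apply_symm_apply y⟩
      rw [LinearMap.mem_ker]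
      funext ⟨k, i⟩
      rw [Matrix.mulVecLin_apply, mulVec_blockDiagonal']
      have := hy k (Set.mem_univ k)
      rw [LinearMap.mem_ker] at this
      have h2 := congrFun this i
      rw [Matrix.mulVecLin_apply] at h2
      simpa [he, Sigma.uncurry] using h2
  calc finrank ℚ (LinearMap.ker (Matrix.blockDiagonal' B).mulVecLin)
      = finrank ℚ ((LinearMap.ker (Matrix.blockDiagonal' B).mulVecLin).map e.toLinearMap) :=
        (LinearEquiv.finrank_map_eq e _).symm
    _ = finrank ℚ (Submodule.pi Set.univ (fun i => LinearMap.ker (B i).mulVecLin)) := by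
        rw [hmap]
    _ = finrank ℚ (∀ i, LinearMap.ker (B i).mulVecLin) :=
        (piSubEquiv _).finrank_eq
    _ = ∑ i, finrank ℚ (LinearMap.ker (B i).mulVecLin) := Module.finrank_pi_fintype ℚ


lemma blockDiag_eq_blockDiagonal' {ι : Type*} [DecidableEq ι] {z : ι → ℕ}
    (B : ∀ i, Matrix (Fin (z i)) (Fin (z i)) ℤ) :
    _root_.blockDiag B = Matrix.blockDiagonal' B := by
  ext ⟨k, i⟩ ⟨k', j⟩
  rw [Matrix.blockDiagonal'_apply']
  unfold _root_.blockDiag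
  rcases eq_or_ne k' k with h | h
  · subst h
    rw [dif_pos rfl, dif_pos rfl]
    rfl
  · rw [dif_neg h, dif_neg (Ne.symm h)]

lemma card_pairs (t : ℕ) :
    Fintype.card {x : Fin t × Fin t // x.1 < x.2} = t * (t - 1) / 2 := by
  have e : {x : Fin t × Fin t // x.1 < x.2} ≃ Σ j : Fin t, Fin (j : ℕ) :=
    { toFun := fun x => ⟨x.1.2, ⟨(x.1.1 : ℕ), x.2⟩⟩
      invFun := fun y => ⟨(⟨(y.2 : ℕ), lt_trans y.2.2 y.1.2⟩, y.1), y.2.2⟩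
      left_inv := fun x => rfl
      right_inv := fun y => rfl }
  rw [Fintype.card_congr e, Fintype.card_sigma]
  simp only [Fintype.card_fin]
  have h1 : (∑ x : Fin t, (x : ℕ)) = ∑ i ∈ Finset.range t, i :=
    Fin.sum_univ_eq_sum_range (fun i => i) t
  rw [h1, Finset.sum_range_id]


/-- over `ℚ`, the eigenspace of `A(q)` for the eigenvalue `1` has dimension
`Σ_j (p_j^{r_j}-1)/2 + t(t-1)/2`; equivalently the rank of `A(q) - I` is
`N - Σ_j (p_j^{r_j}-1)/2 - t(t-1)/2`, where `N` is the size of `A(q)`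
(this is the first Betti number of the flat manifold with fundamental group `Γ_q`). -/
theorem statement11 (t : ℕ) (ht : 1 ≤ t) (p r : Fin t → ℕ)
    (hp : ∀ i, (p i).Prime ∧ Odd (p i)) (hr : ∀ i, 1 ≤ r i)
    (hinj : Function.Injective p)
    (q : ℕ) (hq : q = ∏ i, p i ^ r i) :
    Module.finrank ℚ
        (Module.End.eigenspace
          (Matrix.toLin' ((AMat t p r (q : ℤ)).map ((↑) : ℤ → ℚ))) 1) =
      (∑ j : Fin t, (p j ^ r j - 1) / 2) + t * (t - 1) / 2 ∧
    ((AMat t p r (q : ℤ)).map ((↑) : ℤ → ℚ) - 1).rank =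
      ((∑ j : Fin t, p j ^ r j * (p j ^ r j - 1) / 2) +
        ∑ x : {x : Fin t × Fin t // x.1 < x.2}, p x.1.1 ^ r x.1.1 * p x.1.2 ^ r x.1.2) -
      ((∑ j : Fin t, (p j ^ r j - 1) / 2) + t * (t - 1) / 2) := by
  classical
  have hz3 : ∀ j : Fin t, 3 ≤ p j ^ r j := by
    intro j
    have hp3 : 3 ≤ p j := by
      rcases hp j with ⟨hpr, hodd⟩
      have := hpr.two_le
      rcases Nat.lt_or_ge (p j) 3 with h | h
      · interval_cases (p j)
        · exact absurd hodd (by decide)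
      · exact h
    calc 3 ≤ p j := hp3
      _ = p j ^ 1 := (pow_one _).symm
      _ ≤ p j ^ r j := Nat.pow_le_pow_right (by omega) (hr j)
  have hq0 : (q : ℤ) ≠ 0 := by
    have hpos : 0 < q := by
      rw [hq]
      exact Finset.prod_pos fun i _ => pow_pos (hp i).1.pos (r i)
    exact_mod_cast hpos.ne'
  set Bq : ∀ k : AIdx t p r, Matrix (Fin (ASize t p r k)) (Fin (ASize t p r k)) ℚ :=
    fun k => (ABlocks t p r (q : ℤ) k).map ((↑) : ℤ → ℚ) - 1 with hBq
  have hA : (AMat t p r (q : ℤ)).map ((↑) : ℤ → ℚ) - 1 = Matrix.blockDiagonal' Bq := by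
    rw [AMat, blockDiag_eq_blockDiagonal', Matrix.blockDiagonal'_map _ _ Int.cast_zero]
    rw [hBq]
    ext ⟨k, i⟩ ⟨k', j⟩
    rcases eq_or_ne k k' with h | h
    · subst h
      simp [Matrix.blockDiagonal'_apply_eq, Matrix.one_apply]
    · simp [Matrix.blockDiagonal'_apply_ne _ _ _ h, Matrix.one_apply, h]
  have hblock : ∀ k : AIdx t p r, finrank ℚ (LinearMap.ker (Bq k).mulVecLin) = 1 := by
    rintro (⟨j, b⟩ | ⟨⟨j, h⟩, hjh⟩)
    · rw [hBq]
      simp only [ABlocks]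
      by_cases hb : (b : ℕ) = 0
      · obtain ⟨b, hblt⟩ := b
        simp only at hb
        subst hb
        exact finrank_ker_NQ (hz3 j) _ hq0
      · obtain ⟨_ | b', hblt⟩ := b
        · exact absurd rfl hb
        exact finrank_ker_MQ (lt_of_lt_of_le (by norm_num) (hz3 j))
    · rw [hBq]
      simp only [ABlocks]
      exact finrank_ker_MQ (Nat.mul_pos (lt_of_lt_of_le (by norm_num) (hz3 j))
        (lt_of_lt_of_le (by norm_num) (hz3 h)))
  have hker : finrank ℚ (LinearMap.ker ((AMat t p r (q : ℤ)).map ((↑) : ℤ → ℚ) - 1).mulVecLin)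
      = (∑ j : Fin t, (p j ^ r j - 1) / 2) + t * (t - 1) / 2 := by
    rw [hA, finrank_ker_blockDiagonal']
    simp_rw [hblock]
    rw [Finset.sum_const, Finset.card_univ, smul_eq_mul, mul_one]
    rw [Fintype.card_sum, Fintype.card_sigma, card_pairs]
    simp [Fintype.card_fin]
  have epart : Module.finrank ℚ
      (Module.End.eigenspace
        (Matrix.toLin' ((AMat t p r (q : ℤ)).map ((↑) : ℤ → ℚ))) 1) =
      (∑ j : Fin t, (p j ^ r j - 1) / 2) + t * (t - 1) / 2 := by
    rw [Module.End.eigenspace_def, one_smul]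
    have heq : Matrix.toLin' ((AMat t p r (q : ℤ)).map ((↑) : ℤ → ℚ)) - 1
        = ((AMat t p r (q : ℤ)).map ((↑) : ℤ → ℚ) - 1).mulVecLin := by
      apply LinearMap.ext
      intro v
      simp [Matrix.toLin'_apply, Matrix.mulVecLin_apply, Matrix.sub_mulVec,
        Matrix.one_mulVec]
    rw [heq, hker]
  refine ⟨epart, ?_⟩
  have hrn := LinearMap.finrank_range_add_finrank_ker
    ((AMat t p r (q : ℤ)).map ((↑) : ℤ → ℚ) - 1).mulVecLin
  rw [hker, Module.finrank_pi ℚ] at hrn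
  have hrank : ((AMat t p r (q : ℤ)).map ((↑) : ℤ → ℚ) - 1).rank
      = finrank ℚ (LinearMap.range ((AMat t p r (q : ℤ)).map ((↑) : ℤ → ℚ) - 1).mulVecLin) :=
    rfl
  have hcard : Fintype.card ((k : AIdx t p r) × Fin (ASize t p r k))
      = (∑ j : Fin t, p j ^ r j * (p j ^ r j - 1) / 2) +
        ∑ x : {x : Fin t × Fin t // x.1 < x.2}, p x.1.1 ^ r x.1.1 * p x.1.2 ^ r x.1.2 := by
    rw [Fintype.card_sigma]
    simp only [Fintype.card_fin]
    rw [Fintype.sum_sum_type]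
    congr 1
    · rw [← Finset.univ_sigma_univ, Finset.sum_sigma]
      apply Finset.sum_congr rfl
      intro j _
      have hodd : Odd (p j ^ r j) := (hp j).2.pow
      have h2 : 2 ∣ (p j ^ r j - 1) := by
        rcases hodd with ⟨m, hm⟩; omega
      calc ∑ s : Fin ((p j ^ r j - 1) / 2), ASize t p r (Sum.inl ⟨j, s⟩)
          = ∑ _s : Fin ((p j ^ r j - 1) / 2), p j ^ r j :=
            Finset.sum_congr rfl fun s _ => rfl
        _ = (p j ^ r j - 1) / 2 * (p j ^ r j) := by
            rw [Finset.sum_const, Finset.card_univ, Fintype.card_fin, smul_eq_mul]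
        _ = p j ^ r j * (p j ^ r j - 1) / 2 := by
            rw [Nat.mul_div_assoc _ h2, mul_comm]
  rw [hrank]
  omega
end

section
/- Let P_q(x) = ∏_{j=1}^{t} (x^{p_j^{r_j}} − 1)^{(p_j^{r_j}−1)/2} · ∏_{1 ≤ j < h ≤ t} (x^{p_j^{r_j} p_h^{r_h}} − 1), viewed as a polynomial over C, and let ω = e^{2πi/3} be a primitive cube root of unity. Then: (i) none of the numbers −1, i, −i, −ω, −ω² is a root of P_q; (ii) if q ≠ 3, then each of the numbers 1, ω, ω² is either not a root of P_q or is a root of P_q of multiplicity at least 2; (iii) if q = 3, then P_q(x) = x³ − 1 and each of 1, ω, ω² is a simple root of P_q (this dichotomy is the algebraic content of the fact that the flat manifold with fundamental group Γ_q admits an Anosov diffeomorphism if and only if q ≠ 3). -/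
/-! Matrices `N_z[q]`, `M_z`, and block-diagonal sums. -/

open Polynomial in
private lemma pow_ne_one_of_pow_eq_neg_one (z : ℂ) (k m : ℕ) (hm : Odd m)
    (hk : z ^ k = -1) : z ^ m ≠ 1 := by
  intro h
  have h2 : (z ^ k) ^ m = 1 := by
    rw [← pow_mul, mul_comm, pow_mul, h, one_pow]
  rw [hk, hm.neg_one_pow] at h2
  norm_num at h2

open Polynomial in
/-- roots of the characteristic polynomial
`P_q(x) = ∏_j (x^{p_j^{r_j}} - 1)^{(p_j^{r_j}-1)/2} · ∏_{j<h} (x^{p_j^{r_j} p_h^{r_h}} - 1)`: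
none of `-1, i, -i, -ω, -ω²` is a root; if `q ≠ 3` each of `1, ω, ω²` is not a root or a
root of multiplicity at least `2`; if `q = 3` then `P_q = x³ - 1` and each of `1, ω, ω²`
is a simple root (the algebraic content of the Anosov diffeomorphism criterion). -/
theorem statement12 (t : ℕ) (ht : 1 ≤ t) (p r : Fin t → ℕ)
    (hp : ∀ i, (p i).Prime ∧ Odd (p i)) (hr : ∀ i, 1 ≤ r i)
    (hinj : Function.Injective p)
    (q : ℕ) (hq : q = ∏ i, p i ^ r i)
    (P : ℂ[X])
    (hP : P = (∏ j : Fin t, ((X : ℂ[X]) ^ (p j ^ r j) - 1) ^ ((p j ^ r j - 1) / 2)) *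
        ∏ x : {x : Fin t × Fin t // x.1 < x.2},
          ((X : ℂ[X]) ^ (p x.1.1 ^ r x.1.1 * p x.1.2 ^ r x.1.2) - 1))
    (ω : ℂ) (hω : ω = Complex.exp (2 * Real.pi * Complex.I / 3)) :
    -- (i) none of `-1, i, -i, -ω, -ω²` is a root of `P_q`
    (P.eval (-1) ≠ 0 ∧ P.eval Complex.I ≠ 0 ∧ P.eval (-Complex.I) ≠ 0 ∧
      P.eval (-ω) ≠ 0 ∧ P.eval (-ω ^ 2) ≠ 0) ∧
    -- (ii) if `q ≠ 3`, each of `1, ω, ω²` is not a root of `P_q` or has multiplicity `≥ 2`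
    (q ≠ 3 → ∀ z ∈ ({1, ω, ω ^ 2} : Set ℂ),
      P.eval z ≠ 0 ∨ 2 ≤ P.rootMultiplicity z) ∧
    -- (iii) if `q = 3`, then `P_q = x³ - 1` and each of `1, ω, ω²` is a simple root
    (q = 3 → P = (X : ℂ[X]) ^ 3 - 1 ∧
      ∀ z ∈ ({1, ω, ω ^ 2} : Set ℂ), P.rootMultiplicity z = 1) := by

  -- basic facts
  have hoddm : ∀ j, Odd (p j ^ r j) := fun j => (hp j).2.pow
  have hm3 : ∀ j, 3 ≤ p j ^ r j := by
    intro j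
    obtain ⟨k, hk⟩ := (hp j).2
    have h2 := (hp j).1.two_le
    have hle : p j ≤ p j ^ r j := Nat.le_self_pow (by have := hr j; omega) _
    omega
  have hprim : IsPrimitiveRoot ω 3 := by
    rw [hω]
    have := Complex.isPrimitiveRoot_exp 3 (by norm_num)
    convert this using 3
    norm_num
  have hω3 : ω ^ 3 = 1 := hprim.pow_eq_one
  have hω23 : (ω ^ 2) ^ 3 = 1 := by
    have h : (ω ^ 2) ^ 3 = (ω ^ 3) ^ 2 := by ring
    rw [h, hω3, one_pow]
  have evalP : ∀ z : ℂ, P.eval z =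
      (∏ j, (z ^ (p j ^ r j) - 1) ^ ((p j ^ r j - 1) / 2)) *
        ∏ x : {x : Fin t × Fin t // x.1 < x.2},
          (z ^ (p x.1.1 ^ r x.1.1 * p x.1.2 ^ r x.1.2) - 1) := by
    intro z
    simp [hP, eval_prod]
  have key : ∀ z : ℂ, (∀ m : ℕ, Odd m → z ^ m ≠ 1) → P.eval z ≠ 0 := by
    intro z hz
    rw [evalP]
    apply mul_ne_zero
    · rw [Finset.prod_ne_zero_iff]
      intro j _
      exact pow_ne_zero _ (sub_ne_zero.mpr (hz _ (hoddm j)))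
    · rw [Finset.prod_ne_zero_iff]
      intro x _
      exact sub_ne_zero.mpr (hz _ ((hoddm _).mul (hoddm _)))
  have h1 : P.eval (-1) ≠ 0 :=
    key _ (fun m hm => pow_ne_one_of_pow_eq_neg_one _ 1 m hm (by norm_num))
  have hI : P.eval Complex.I ≠ 0 :=
    key _ (fun m hm => pow_ne_one_of_pow_eq_neg_one _ 2 m hm (by simp [Complex.I_sq]))
  have hnI : P.eval (-Complex.I) ≠ 0 :=
    key _ (fun m hm => pow_ne_one_of_pow_eq_neg_one _ 2 m hm (by simp [Complex.I_sq]))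
  have hnω : P.eval (-ω) ≠ 0 :=
    key _ (fun m hm => pow_ne_one_of_pow_eq_neg_one _ 3 m hm
      (by rw [show (-ω) ^ 3 = -(ω ^ 3) by ring, hω3]))
  have hnω2 : P.eval (-ω ^ 2) ≠ 0 :=
    key _ (fun m hm => pow_ne_one_of_pow_eq_neg_one _ 3 m hm
      (by rw [show (-ω ^ 2) ^ 3 = -((ω ^ 2) ^ 3) by ring, hω23]))
  have hP0 : P ≠ 0 := by
    intro h
    rw [h] at h1
    simp at h1
  refine ⟨⟨h1, hI, hnI, hnω, hnω2⟩, ?_, ?_⟩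
  · -- part (ii)
    intro hq3 z hz
    simp only [Set.mem_insert_iff, Set.mem_singleton_iff] at hz
    have hz3 : z ^ 3 = 1 := by
      rcases hz with rfl | rfl | rfl
      · norm_num
      · exact hω3
      · exact hω23
    have hfdvd : ∀ j : Fin t, z ^ (p j ^ r j) = 1 →
        (X - C z) ∣ ((X : ℂ[X]) ^ (p j ^ r j) - 1) := by
      intro j hzj
      rw [dvd_iff_isRoot]
      simp [IsRoot, hzj]
    have mainE : ∀ j : Fin t, 2 ≤ (p j ^ r j - 1) / 2 → z ^ (p j ^ r j) = 1 →
        (X - C z) ^ 2 ∣ P := by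
      intro j he hzj
      have h2 : (X - C z) ^ 2 ∣ ((X : ℂ[X]) ^ (p j ^ r j) - 1) ^ ((p j ^ r j - 1) / 2) :=
        (pow_dvd_pow _ he).trans (pow_dvd_pow_of_dvd (hfdvd j hzj) _)
      rw [hP]
      exact dvd_mul_of_dvd_left (h2.trans (Finset.dvd_prod_of_mem
        (fun j' => ((X : ℂ[X]) ^ (p j' ^ r j') - 1) ^ ((p j' ^ r j' - 1) / 2))
        (Finset.mem_univ j))) _
    have main2 : ∀ j : Fin t, 2 ≤ t → z ^ (p j ^ r j) = 1 → (X - C z) ^ 2 ∣ P := by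
      intro j ht2 hzj
      have hA : (X - C z) ∣
          ∏ j', ((X : ℂ[X]) ^ (p j' ^ r j') - 1) ^ ((p j' ^ r j' - 1) / 2) := by
        refine ((hfdvd j hzj).trans (dvd_pow_self _ ?_)).trans
          (Finset.dvd_prod_of_mem
            (fun j' => ((X : ℂ[X]) ^ (p j' ^ r j') - 1) ^ ((p j' ^ r j' - 1) / 2))
            (Finset.mem_univ j))
        have := hm3 j; omega
      obtain ⟨x, hx⟩ : ∃ x : {x : Fin t × Fin t // x.1 < x.2}, x.1.1 = j ∨ x.1.2 = j := by
        by_cases h0 : (j : ℕ) = 0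
        · exact ⟨⟨(j, ⟨1, by omega⟩), by simp only [Fin.lt_def]; omega⟩, Or.inl rfl⟩
        · exact ⟨⟨(⟨0, by omega⟩, j), by simp only [Fin.lt_def]; omega⟩, Or.inr rfl⟩
      have hzx : z ^ (p x.1.1 ^ r x.1.1 * p x.1.2 ^ r x.1.2) = 1 := by
        rcases hx with h | h
        · rw [h, pow_mul, hzj, one_pow]
        · rw [h, mul_comm, pow_mul, hzj, one_pow]
      have hB : (X - C z) ∣ ∏ x' : {x : Fin t × Fin t // x.1 < x.2},
          ((X : ℂ[X]) ^ (p x'.1.1 ^ r x'.1.1 * p x'.1.2 ^ r x'.1.2) - 1) := by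
        refine Dvd.dvd.trans ?_ (Finset.dvd_prod_of_mem
          (fun x' : {x : Fin t × Fin t // x.1 < x.2} =>
            ((X : ℂ[X]) ^ (p x'.1.1 ^ r x'.1.1 * p x'.1.2 ^ r x'.1.2) - 1))
          (Finset.mem_univ x))
        rw [dvd_iff_isRoot]
        simp [IsRoot, hzx]
      rw [hP, sq]
      exact mul_dvd_mul hA hB
    have hq1 : t = 1 → ∀ j : Fin t, q = p j ^ r j := by
      intro ht1 j
      rw [hq]
      exact Finset.prod_eq_single j
        (fun b _ hb => absurd (Fin.ext (by have := b.isLt; have := j.isLt; omega)) hb)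
        (fun h => absurd (Finset.mem_univ _) h)
    by_cases hz1 : z = 1
    · subst hz1
      right
      rw [le_rootMultiplicity_iff hP0]
      rcases Nat.lt_or_ge t 2 with ht2 | ht2
      · have ht1 : t = 1 := by omega
        refine mainE ⟨0, by omega⟩ ?_ (one_pow _)
        have hqq := hq1 ht1 ⟨0, by omega⟩
        obtain ⟨k, hk⟩ := hoddm ⟨0, by omega⟩
        have := hm3 ⟨0, by omega⟩
        omega
      · exact main2 ⟨0, by omega⟩ ht2 (one_pow _)
    · have hpowiff : ∀ m : ℕ, z ^ m = 1 ↔ 3 ∣ m := by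
        intro m
        constructor
        · intro h
          have hrep : z ^ (m % 3) = 1 := by
            have h1' : z ^ m = z ^ (3 * (m / 3)) * z ^ (m % 3) := by
              rw [← pow_add]
              congr 1
              omega
            rw [pow_mul, hz3, one_pow, one_mul] at h1'
            rw [← h1', h]
          have hcase : m % 3 = 0 ∨ m % 3 = 1 ∨ m % 3 = 2 := by omega
          rcases hcase with h0 | h1' | h2
          · omega
          · rw [h1', pow_one] at hrep
            exact absurd hrep hz1
          · rw [h2] at hrep
            have hz' : z = 1 := by
              calc z = z * z ^ 2 := by rw [hrep, mul_one]
              _ = z ^ 3 := by ring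
              _ = 1 := hz3
            exact absurd hz' hz1
        · rintro ⟨k, rfl⟩
          rw [pow_mul, hz3, one_pow]
      by_cases hp3 : ∃ j, p j = 3
      · obtain ⟨jj, hjj⟩ := hp3
        right
        rw [le_rootMultiplicity_iff hP0]
        have hdvd3 : (3 : ℕ) ∣ p jj ^ r jj := by
          rw [← hjj]
          exact dvd_pow_self _ (by have := hr jj; omega)
        have hzjj : z ^ (p jj ^ r jj) = 1 := (hpowiff _).mpr hdvd3
        rcases Nat.lt_or_ge t 2 with ht2 | ht2
        · have ht1 : t = 1 := by omega
          refine mainE jj ?_ hzjj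
          have hqq := hq1 ht1 jj
          have hr2 : 2 ≤ r jj := by
            by_contra h
            have hr1 : r jj = 1 := by have := hr jj; omega
            rw [hr1, pow_one, hjj] at hqq
            exact hq3 hqq
          have h9 : 9 ≤ p jj ^ r jj := by
            calc (9 : ℕ) = 3 ^ 2 := by norm_num
            _ ≤ 3 ^ r jj := Nat.pow_le_pow_right (by norm_num) hr2
            _ = p jj ^ r jj := by rw [hjj]
          omega
        · exact main2 jj ht2 hzjj
      · left
        push_neg at hp3
        have hnd3 : ∀ j, ¬ (3 : ℕ) ∣ p j ^ r j := by
          intro j hd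
          exact hp3 j ((Nat.prime_dvd_prime_iff_eq Nat.prime_three (hp j).1).mp
            (Nat.prime_three.dvd_of_dvd_pow hd)).symm
        rw [evalP]
        apply mul_ne_zero
        · rw [Finset.prod_ne_zero_iff]
          intro j _
          exact pow_ne_zero _ (sub_ne_zero.mpr fun h => hnd3 j ((hpowiff _).mp h))
        · rw [Finset.prod_ne_zero_iff]
          intro x _
          refine sub_ne_zero.mpr fun h => ?_
          rcases (Nat.Prime.dvd_mul Nat.prime_three).mp ((hpowiff _).mp h) with h' | h'
          · exact hnd3 _ h'
          · exact hnd3 _ h'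
  · -- part (iii)
    intro hq3
    have h3t : 3 ^ t ≤ q := by
      calc (3 : ℕ) ^ t = ∏ _i : Fin t, 3 := by
            rw [Finset.prod_const, Finset.card_univ, Fintype.card_fin]
      _ ≤ ∏ i, p i ^ r i := Finset.prod_le_prod (fun _ _ => by omega) (fun i _ => hm3 i)
      _ = q := hq.symm
    have ht1 : t = 1 := by
      by_contra h
      have ht2 : 2 ≤ t := by omega
      have h9 : 9 ≤ q := le_trans (by
        calc (9 : ℕ) = 3 ^ 2 := by norm_num
        _ ≤ 3 ^ t := Nat.pow_le_pow_right (by norm_num) ht2) h3t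
      omega
    subst ht1
    rw [Fin.prod_univ_one] at hq
    have hpr : p 0 ^ r 0 = 3 := by rw [← hq, hq3]
    have hp0 : p 0 = 3 := by
      have hd : p 0 ∣ 3 := by
        rw [← hpr]
        exact dvd_pow_self _ (by have := hr 0; omega)
      exact (Nat.prime_dvd_prime_iff_eq (hp 0).1 Nat.prime_three).mp hd
    rw [hp0] at hpr
    have hr0 : r 0 = 1 := by
      apply Nat.pow_right_injective (by norm_num : 2 ≤ 3)
      show (3 : ℕ) ^ r 0 = 3 ^ 1
      rw [hpr, pow_one]
    haveI hEmpty : IsEmpty {x : Fin 1 × Fin 1 // x.1 < x.2} :=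
      ⟨fun x => by
        have h := x.2
        rw [Fin.lt_def] at h
        have h1 := x.1.1.isLt
        have h2 := x.1.2.isLt
        omega⟩
    have hP3 : P = (X : ℂ[X]) ^ 3 - 1 := by
      rw [hP, Fin.prod_univ_one, hp0, hr0, Finset.univ_eq_empty, Finset.prod_empty, mul_one]
      norm_num
    refine ⟨hP3, ?_⟩
    intro w hw
    simp only [Set.mem_insert_iff, Set.mem_singleton_iff] at hw
    have hw3 : w ^ 3 = 1 := by
      rcases hw with rfl | rfl | rfl
      · norm_num
      · exact hω3
      · exact hω23
    have hw0 : w ≠ 0 := by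
      intro h
      rw [h] at hw3
      norm_num at hw3
    have hroot : P.IsRoot w := by
      rw [hP3]
      simp [IsRoot, hw3]
    have h1le : 1 ≤ P.rootMultiplicity w := (rootMultiplicity_pos hP0).mpr hroot
    have hlt : ¬ 1 < P.rootMultiplicity w := by
      rw [one_lt_rootMultiplicity_iff_isRoot hP0]
      rintro ⟨-, hder⟩
      rw [hP3] at hder
      simp only [IsRoot, derivative_sub, derivative_one, derivative_X_pow, sub_zero,
        eval_mul, eval_pow, eval_X, eval_natCast] at hder
      have : (3 : ℂ) * w ^ 2 = 0 := by simpa using hder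
      rcases mul_eq_zero.mp this with h | h
      · norm_num at h
      · exact hw0 (pow_eq_zero_iff (by norm_num) |>.mp h)
    omega
end
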